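/- For any Parseval frame Φ for F^N with M vectors, NE_2(Φ) = ∑_{|K|=2} ||Φ_K||_* satisfies NE_2(Φ)² ≤ (M(M−1)/2)·(N(M−1) + 2V_2(Φ)), where V_2(Φ) = ∑_{i<j} sqrt(det(Φ_{{i,j}}*Φ_{{i,j}})), with equality if and only if ||Φ_K||_* is constant over all two-element subsets K. -/

import Mathlib

/-! For a matrix `A` with two columns, `‖A‖_*² = σ₁² + σ₂² + 2σ₁σ₂ = tr (Aᴴ A) + 2 √(det (Aᴴ A))`.
Every column of `Φ` lies in exactly `M - 1` of the pairs, so the traces sum to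
`(M - 1) tr (Φᴴ Φ) = (M - 1) tr (Φ Φᴴ) = N (M - 1)`, and the bound with its equality case is
Cauchy–Schwarz over the `M (M - 1) / 2` pairs. -/

open Matrix Finset

noncomputable def colSub {N M : ℕ} (Φ : Matrix (Fin N) (Fin M) ℂ) (K : Finset (Fin M)) :
    Matrix (Fin N) ↥K ℂ := Φ.submatrix id (fun k => (k : Fin M))

/-- The k-dimensional volume of the parallelotope spanned by the columns of Φ indexed by K. -/
noncomputable def vol {N M : ℕ} (Φ : Matrix (Fin N) (Fin M) ℂ) (K : Finset (Fin M)) : ℝ :=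
  Real.sqrt (((colSub Φ K)ᴴ * colSub Φ K).det.re)


/-- The nuclear norm: the sum of the singular values, i.e. of the square roots of the
eigenvalues of Aᴴ * A. -/
noncomputable def nuclearNorm {m n : Type*} [Fintype m] [Fintype n] [DecidableEq n]
    (A : Matrix m n ℂ) : ℝ :=
  ∑ i, Real.sqrt ((Matrix.isHermitian_conjTranspose_mul_self A).eigenvalues i)

namespace Finset

variable {ι α : Type*}

theorem sq_sum_eq_card_mul_sum_sq_iff [Field α] [LinearOrder α] [IsStrictOrderedRing α]
    {s : Finset ι} {f : ι → α} :
    (∑ i ∈ s, f i) ^ 2 = #s * ∑ i ∈ s, f i ^ 2 ↔ ∃ c, ∀ i ∈ s, f i = c := by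
  constructor
  · intro h
    rcases s.eq_empty_or_nonempty with rfl | hs
    · exact ⟨0, by simp⟩
    set μ := (∑ i ∈ s, f i) / #s
    have hcard : (#s : α) ≠ 0 := by positivity
    have hvar : #s * ∑ i ∈ s, (f i - μ) ^ 2 = #s * ∑ i ∈ s, f i ^ 2 - (∑ i ∈ s, f i) ^ 2 := by
      simp only [sub_sq, sum_add_distrib, sum_sub_distrib, sum_const, nsmul_eq_mul, ← sum_mul,
        ← mul_sum, μ]
      field_simp
      ring
    rw [h, sub_self, mul_eq_zero, or_iff_right hcard,
      sum_eq_zero_iff_of_nonneg fun i _ ↦ sq_nonneg _] at hvar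
    exact ⟨μ, fun i hi ↦ sub_eq_zero.mp (pow_eq_zero_iff two_ne_zero |>.mp (hvar i hi))⟩
  · rintro ⟨c, hc⟩
    rw [sum_congr rfl hc, sum_congr rfl fun i hi ↦ show f i ^ 2 = c ^ 2 by rw [hc i hi],
      sum_const, sum_const, nsmul_eq_mul, nsmul_eq_mul]
    ring

theorem sum_powersetCard_succ_sum [DecidableEq ι] [AddCommMonoid α] (s : Finset ι) (n : ℕ)
    (g : ι → α) :
    ∑ K ∈ s.powersetCard (n + 1), ∑ k ∈ K, g k = (#s - 1).choose n • ∑ k ∈ s, g k := by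
  calc ∑ K ∈ s.powersetCard (n + 1), ∑ k ∈ K, g k
      = ∑ K ∈ s.powersetCard (n + 1), ∑ k ∈ s, if k ∈ K then g k else 0 := by
        refine sum_congr rfl fun K hK ↦ ?_
        rw [sum_ite_mem, inter_eq_right.mpr (mem_powersetCard.mp hK).1]
    _ = ∑ k ∈ s, #((s.powersetCard (n + 1)).filter ({k} ⊆ ·)) • g k := by
        rw [sum_comm]
        simp only [sum_ite, sum_const_zero, add_zero, sum_const, singleton_subset_iff]
    _ = (#s - 1).choose n • ∑ k ∈ s, g k := by
        rw [smul_sum]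
        refine sum_congr rfl fun k hk ↦ ?_
        rw [card_filter_powersetCard_subset _ _ _ (singleton_subset_iff.mpr hk) (by simp),
          card_singleton, Nat.add_sub_cancel]

theorem sum_powersetCard_two_sum [DecidableEq ι] [Ring α] (s : Finset ι) (g : ι → α) :
    ∑ K ∈ s.powersetCard 2, ∑ k ∈ K, g k = (#s - 1 : α) * ∑ k ∈ s, g k := by
  rw [sum_powersetCard_succ_sum, Nat.choose_one_right, nsmul_eq_mul]
  rcases s.eq_empty_or_nonempty with rfl | hs
  · simp
  · rw [Nat.cast_pred hs.card_pos]

end Finset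

theorem nuclearNorm_sq_of_card_eq_two {m n : Type*} [Fintype m] [Fintype n] [DecidableEq n]
    (A : Matrix m n ℂ) (hn : Fintype.card n = 2) :
    nuclearNorm A ^ 2 = (Aᴴ * A).trace.re + 2 * Real.sqrt (Aᴴ * A).det.re := by
  obtain ⟨x, y, hxy, huniv⟩ := card_eq_two.mp (show #(univ : Finset n) = 2 from hn)
  set hA := isHermitian_conjTranspose_mul_self A
  have hnonneg := eigenvalues_conjTranspose_mul_self_nonneg A
  rw [nuclearNorm, hA.trace_eq_sum_eigenvalues, hA.det_eq_prod_eigenvalues, huniv,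
    sum_pair hxy, sum_pair hxy, prod_pair hxy, add_sq, Real.sq_sqrt (hnonneg x),
    Real.sq_sqrt (hnonneg y)]
  simp [← Complex.ofReal_mul, Real.sqrt_mul (hnonneg x)]
  ring

theorem colSub_conjTranspose_mul_self {N M : ℕ} (Φ : Matrix (Fin N) (Fin M) ℂ)
    (K : Finset (Fin M)) :
    (colSub Φ K)ᴴ * colSub Φ K = (Φᴴ * Φ).submatrix (↑) (↑) := by
  rw [colSub, conjTranspose_submatrix, submatrix_mul _ _ _ id _ Function.bijective_id]

theorem sum_re_trace_gram_colSub_pairs {N M : ℕ} (Φ : Matrix (Fin N) (Fin M) ℂ)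
    (hΦ : Φ * Φᴴ = 1) :
    ∑ K ∈ powersetCard 2 (univ : Finset (Fin M)), ((colSub Φ K)ᴴ * colSub Φ K).trace.re
      = N * (M - 1) := by
  have htrace : (Φᴴ * Φ).trace = N := by
    rw [trace_mul_comm, hΦ, trace_one, Fintype.card_fin]
  calc ∑ K ∈ powersetCard 2 univ, ((colSub Φ K)ᴴ * colSub Φ K).trace.re
      = ∑ K ∈ powersetCard 2 univ, ∑ k ∈ K, ((Φᴴ * Φ) k k).re := by
        refine sum_congr rfl fun K _ ↦ ?_
        rw [colSub_conjTranspose_mul_self, trace, Complex.re_sum]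
        exact sum_coe_sort K fun k ↦ ((Φᴴ * Φ) k k).re
    _ = (M - 1) * (Φᴴ * Φ).trace.re := by
        rw [sum_powersetCard_two_sum, card_univ, Fintype.card_fin, trace, Complex.re_sum]
        rfl
    _ = N * (M - 1) := by rw [htrace, Complex.natCast_re, mul_comm]

/-- The 2-nuclear energy bound: NE₂(Φ)² ≤ (M(M−1)/2)·(N(M−1) + 2V₂(Φ)) for a Parseval frame,
with equality iff the nuclear norms of all two-element subsets agree. -/
theorem nuclear_energy_two_bound {N M : ℕ}
    (Φ : Matrix (Fin N) (Fin M) ℂ) (hΦ : Φ * Φᴴ = 1) :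
    ((∑ K ∈ Finset.powersetCard 2 (Finset.univ : Finset (Fin M)),
          nuclearNorm (colSub Φ K)) ^ 2 ≤
        ((M : ℝ) * ((M : ℝ) - 1) / 2) * ((N : ℝ) * ((M : ℝ) - 1) +
          2 * ∑ K ∈ Finset.powersetCard 2 (Finset.univ : Finset (Fin M)), vol Φ K)) ∧
      (((∑ K ∈ Finset.powersetCard 2 (Finset.univ : Finset (Fin M)),
            nuclearNorm (colSub Φ K)) ^ 2 =
          ((M : ℝ) * ((M : ℝ) - 1) / 2) * ((N : ℝ) * ((M : ℝ) - 1) +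
            2 * ∑ K ∈ Finset.powersetCard 2 (Finset.univ : Finset (Fin M)), vol Φ K)) ↔
        ∃ c : ℝ, ∀ K ∈ Finset.powersetCard 2 (Finset.univ : Finset (Fin M)),
          nuclearNorm (colSub Φ K) = c) := by
  set S := powersetCard 2 (univ : Finset (Fin M))
  have hcard : (#S : ℝ) = M * (M - 1) / 2 := by
    rw [card_powersetCard, card_univ, Fintype.card_fin, Nat.cast_choose_two]
  have henergy :
      ∑ K ∈ S, nuclearNorm (colSub Φ K) ^ 2 = N * (M - 1) + 2 * ∑ K ∈ S, vol Φ K := by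
    rw [← sum_re_trace_gram_colSub_pairs Φ hΦ, mul_sum, ← sum_add_distrib]
    refine sum_congr rfl fun K hK ↦ nuclearNorm_sq_of_card_eq_two _ ?_
    rw [Fintype.card_coe, (mem_powersetCard.mp hK).2]
  rw [← hcard, ← henergy]
  exact ⟨sq_sum_le_card_mul_sum_sq, sq_sum_eq_card_mul_sum_sq_iff⟩
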